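/- arXiv:1502.06868 — 2 statements merged into one kernel-verified Lean document; each statement's English description precedes it below -/
import Mathlib

section
/- Let (X, F) be a measurable space, μ : F → [0,1] a monotone measure, p, q ≥ 1, and let f, g, h : X → [0,1] be measurable functions such that f, g are comonotone and f, h are comonotone. Then for every A ∈ F, ((S)∫_A f dμ) · ((S)∫_A g dμ)^{p/(p+q)} · ((S)∫_A h dμ)^{q/(p+q)} ≤ ((S)∫_A f^p g^p dμ)^{1/(p+q)} · ((S)∫_A f^q h^q dμ)^{1/(p+q)}. -/
/-!
For comonotone `u, v` the level sets `{α ≤ u}` and `{β ≤ v}` are nested, so `μ` of their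
intersection is the smaller of the two measures; this gives the Chebyshev inequality
`S(u) S(v) ≤ S(u v)` for the Sugeno integral `S`. Since `t ^ r ≤ t` on `[0,1]` for `r ≥ 1`, also
`S(u) ^ r ≤ S(u ^ r)`. Powers of comonotone functions are comonotone, so
`S(f) ^ p S(g) ^ p ≤ S(f ^ p g ^ p)` and `S(f) ^ q S(h) ^ q ≤ S(f ^ q h ^ q)`; taking
`(p + q)`-th roots and multiplying gives the inequality, because
`S(f) = S(f) ^ (p/(p+q)) S(f) ^ (q/(p+q))`.
-/

/-- The Sugeno integral of a `[0,1]`-valued function `f` on `A` with respect to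
a `[0,1]`-valued monotone measure `μ`:
`(S)∫_A f dμ = sup_{α ∈ [0,1]} min(α, μ(A ∩ {f ≥ α}))`. -/
noncomputable def sugeno01 {X : Type*} (μ : Set X → ℝ) (f : X → ℝ)
    (A : Set X) : ℝ :=
  ⨆ α : Set.Icc (0:ℝ) 1, min α.1 (μ (A ∩ {x | α.1 ≤ f x}))

open Set

theorem Monovary.rpow {ι : Type*} {u v : ι → ℝ} (huv : Monovary u v) (hu : 0 ≤ u) (hv : 0 ≤ v)
    {r : ℝ} (hr : 0 ≤ r) : Monovary (fun x => u x ^ r) (fun x => v x ^ r) := by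
  intro i j hij
  have hv_lt : v i < v j := lt_of_not_ge fun h => hij.not_ge (Real.rpow_le_rpow (hv j) h hr)
  exact Real.rpow_le_rpow (hu i) (huv hv_lt) hr

theorem Monovary.setOf_le_total {ι α β : Type*} [Preorder α] [LinearOrder β] {u : ι → α}
    {v : ι → β} (huv : Monovary u v) (a : α) (b : β) :
    {x | a ≤ u x} ⊆ {x | b ≤ v x} ∨ {x | b ≤ v x} ⊆ {x | a ≤ u x} := by
  by_contra! hc
  obtain ⟨x, hxu, hxv⟩ := not_subset.mp hc.1
  obtain ⟨y, hyv, hyu⟩ := not_subset.mp hc.2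
  exact hyu (hxu.trans (huv ((not_le.mp hxv).trans_le hyv)))

theorem min_mul_min_le {α β a b : ℝ} (hα : α ∈ Icc (0:ℝ) 1) (hβ : β ∈ Icc (0:ℝ) 1)
    (ha : 0 ≤ a) (hb : 0 ≤ b) : min α a * min β b ≤ min (α * β) (min a b) := by
  have hβb : 0 ≤ min β b := le_min hβ.1 hb
  refine le_min (mul_le_mul (min_le_left _ _) (min_le_left _ _) hβb hα.1) (le_min ?_ ?_)
  · simpa using mul_le_mul (min_le_right α a) ((min_le_left β b).trans hβ.2) hβb ha
  · simpa using mul_le_mul ((min_le_left α a).trans hα.2) (min_le_right β b) hβb zero_le_one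

section SugenoIntegral

variable {X : Type*} {μ : Set X → ℝ} {A : Set X}

theorem sugeno01_bddAbove_range (μ : Set X → ℝ) (f : X → ℝ) (A : Set X) :
    BddAbove (range fun α : Icc (0:ℝ) 1 => min α.1 (μ (A ∩ {x | α.1 ≤ f x}))) :=
  ⟨1, by rintro _ ⟨α, rfl⟩; exact (min_le_left _ _).trans α.2.2⟩

theorem le_sugeno01 (f : X → ℝ) {α : ℝ} (hα : α ∈ Icc (0:ℝ) 1) :
    min α (μ (A ∩ {x | α ≤ f x})) ≤ sugeno01 μ f A :=
  le_ciSup (sugeno01_bddAbove_range μ f A) ⟨α, hα⟩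

theorem sugeno01_le {f : X → ℝ} {c : ℝ}
    (h : ∀ α ∈ Icc (0:ℝ) 1, min α (μ (A ∩ {x | α ≤ f x})) ≤ c) : sugeno01 μ f A ≤ c :=
  ciSup_le fun α => h α.1 α.2

variable [MeasurableSpace X]

theorem measurableSet_inter_setOf_le (hA : MeasurableSet A) {f : X → ℝ} (hf : Measurable f)
    (α : ℝ) : MeasurableSet (A ∩ {x | α ≤ f x}) :=
  hA.inter (measurableSet_le measurable_const hf)

theorem sugeno01_nonneg (hμ : ∀ s, MeasurableSet s → 0 ≤ μ s) {f : X → ℝ} (hf : Measurable f)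
    (hA : MeasurableSet A) : 0 ≤ sugeno01 μ f A := by
  have h := le_sugeno01 (μ := μ) (A := A) f (left_mem_Icc.mpr zero_le_one)
  rwa [min_eq_left (hμ _ (measurableSet_inter_setOf_le hA hf 0))] at h

theorem mul_sugeno01_le (hμ : ∀ s, MeasurableSet s → 0 ≤ μ s) {u v : X → ℝ}
    (hu : Measurable u) (hv : Measurable v) (hA : MeasurableSet A) {c : ℝ}
    (h : ∀ α ∈ Icc (0:ℝ) 1, ∀ β ∈ Icc (0:ℝ) 1,
      min α (μ (A ∩ {x | α ≤ u x})) * min β (μ (A ∩ {x | β ≤ v x})) ≤ c) :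
    sugeno01 μ u A * sugeno01 μ v A ≤ c := by
  rw [sugeno01, Real.iSup_mul_of_nonneg (sugeno01_nonneg hμ hv hA)]
  refine ciSup_le fun α => ?_
  rw [sugeno01, Real.mul_iSup_of_nonneg
    (le_min α.2.1 (hμ _ (measurableSet_inter_setOf_le hA hu _)))]
  exact ciSup_le fun β => h α.1 α.2 β.1 β.2

theorem sugeno01_mul_le_of_monovary (hμ : ∀ s, MeasurableSet s → 0 ≤ μ s)
    (hμmono : ∀ s t, MeasurableSet s → MeasurableSet t → s ⊆ t → μ s ≤ μ t)
    {u v : X → ℝ} (hu : Measurable u) (hv : Measurable v) (huv : Monovary u v)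
    (hA : MeasurableSet A) :
    sugeno01 μ u A * sugeno01 μ v A ≤ sugeno01 μ (fun x => u x * v x) A := by
  refine mul_sugeno01_le hμ hu hv hA fun α hα β hβ => ?_
  set U := A ∩ {x | α ≤ u x}
  set V := A ∩ {x | β ≤ v x}
  have hU : MeasurableSet U := measurableSet_inter_setOf_le hA hu α
  have hV : MeasurableSet V := measurableSet_inter_setOf_le hA hv β
  have h_inter : min (μ U) (μ V) ≤ μ (U ∩ V) := by
    rcases huv.setOf_le_total α β with h | h
    · rw [inter_eq_left.mpr (inter_subset_inter_right A h)]
      exact min_le_left _ _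
    · rw [inter_eq_right.mpr (inter_subset_inter_right A h)]
      exact min_le_right _ _
  have h_sub : U ∩ V ⊆ A ∩ {x | α * β ≤ u x * v x} := by
    rintro x ⟨⟨hxA, hxu⟩, -, hxv⟩
    exact ⟨hxA, mul_le_mul hxu hxv hβ.1 (hα.1.trans hxu)⟩
  have hαβ : α * β ∈ Icc (0:ℝ) 1 := ⟨mul_nonneg hα.1 hβ.1, mul_le_one₀ hα.2 hβ.1 hβ.2⟩
  calc min α (μ U) * min β (μ V) ≤ min (α * β) (min (μ U) (μ V)) :=
        min_mul_min_le hα hβ (hμ U hU) (hμ V hV)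
    _ ≤ min (α * β) (μ (A ∩ {x | α * β ≤ u x * v x})) :=
        min_le_min_left _ <| h_inter.trans <| hμmono _ _ (hU.inter hV)
          (measurableSet_inter_setOf_le hA (hu.mul hv) _) h_sub
    _ ≤ _ := le_sugeno01 _ hαβ

theorem rpow_sugeno01_le (hμ : ∀ s, MeasurableSet s → 0 ≤ μ s)
    (hμmono : ∀ s t, MeasurableSet s → MeasurableSet t → s ⊆ t → μ s ≤ μ t)
    {u : X → ℝ} (hu : Measurable u) (hA : MeasurableSet A) {r : ℝ} (hr : 1 ≤ r) :
    sugeno01 μ u A ^ r ≤ sugeno01 μ (fun x => u x ^ r) A := by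
  have hr0 : 0 < r := one_pos.trans_le hr
  have hT := sugeno01_nonneg hμ (hu.pow_const r) hA
  rw [← Real.le_rpow_inv_iff_of_pos (sugeno01_nonneg hμ hu hA) hT hr0]
  refine sugeno01_le fun α hα => ?_
  set U := A ∩ {x | α ≤ u x}
  have hU : MeasurableSet U := measurableSet_inter_setOf_le hA hu α
  have hm0 : 0 ≤ min α (μ U) := le_min hα.1 (hμ U hU)
  rw [Real.le_rpow_inv_iff_of_pos hm0 hT hr0]
  have hαr : α ^ r ∈ Icc (0:ℝ) 1 :=
    ⟨Real.rpow_nonneg hα.1 r, Real.rpow_le_one hα.1 hα.2 hr0.le⟩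
  have h_sub : U ⊆ A ∩ {x | α ^ r ≤ u x ^ r} := fun x ⟨hxA, hx⟩ =>
    ⟨hxA, Real.rpow_le_rpow hα.1 hx hr0.le⟩
  calc min α (μ U) ^ r ≤ min (α ^ r) (μ U) :=
        le_min (Real.rpow_le_rpow hm0 (min_le_left _ _) hr0.le)
          ((Real.rpow_le_self_of_le_one hm0 ((min_le_left _ _).trans hα.2) hr).trans
            (min_le_right _ _))
    _ ≤ min (α ^ r) (μ (A ∩ {x | α ^ r ≤ u x ^ r})) :=
        min_le_min_left _ <|
          hμmono _ _ hU (measurableSet_inter_setOf_le hA (hu.pow_const r) _) h_sub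
    _ ≤ _ := le_sugeno01 _ hαr

theorem rpow_mul_rpow_le_sugeno01 (hμ : ∀ s, MeasurableSet s → 0 ≤ μ s)
    (hμmono : ∀ s t, MeasurableSet s → MeasurableSet t → s ⊆ t → μ s ≤ μ t)
    {u v : X → ℝ} (hu : Measurable u) (hv : Measurable v) (hu0 : 0 ≤ u) (hv0 : 0 ≤ v)
    (huv : Monovary u v) (hA : MeasurableSet A) {r : ℝ} (hr : 1 ≤ r) :
    sugeno01 μ u A ^ r * sugeno01 μ v A ^ r ≤ sugeno01 μ (fun x => u x ^ r * v x ^ r) A :=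
  calc sugeno01 μ u A ^ r * sugeno01 μ v A ^ r
      ≤ sugeno01 μ (fun x => u x ^ r) A * sugeno01 μ (fun x => v x ^ r) A :=
        mul_le_mul (rpow_sugeno01_le hμ hμmono hu hA hr) (rpow_sugeno01_le hμ hμmono hv hA hr)
          (Real.rpow_nonneg (sugeno01_nonneg hμ hv hA) r)
          (sugeno01_nonneg hμ (hu.pow_const r) hA)
    _ ≤ _ := sugeno01_mul_le_of_monovary hμ hμmono (hu.pow_const r) (hv.pow_const r)
        (huv.rpow hu0 hv0 (zero_le_one.trans hr)) hA

end SugenoIntegral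

theorem mul_rpow_div_add_mul_rpow_div_add_eq {F G H p q : ℝ} (hF : 0 ≤ F) (hG : 0 ≤ G)
    (hH : 0 ≤ H) (hpq : p + q ≠ 0) :
    F * G ^ (p / (p + q)) * H ^ (q / (p + q)) =
      (F ^ p * G ^ p) ^ (1 / (p + q)) * (F ^ q * H ^ q) ^ (1 / (p + q)) := by
  have hsum : p / (p + q) + q / (p + q) = 1 := by rw [← add_div, div_self hpq]
  have hF_split : F ^ (p / (p + q)) * F ^ (q / (p + q)) = F := by
    rw [← Real.rpow_add' hF (by rw [hsum]; exact one_ne_zero), hsum, Real.rpow_one]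
  rw [Real.mul_rpow (Real.rpow_nonneg hF p) (Real.rpow_nonneg hG p),
    Real.mul_rpow (Real.rpow_nonneg hF q) (Real.rpow_nonneg hH q),
    ← Real.rpow_mul hF, ← Real.rpow_mul hG, ← Real.rpow_mul hF, ← Real.rpow_mul hH,
    mul_one_div, mul_one_div]
  nth_rewrite 1 [← hF_split]
  ring

theorem carlson_sugeno_wang_general {X : Type*} [MeasurableSpace X]
    -- μ : F → [0,1] is a monotone measure
    (μ : Set X → ℝ)
    (hμY : ∀ A : Set X, MeasurableSet A → μ A ∈ Set.Icc (0:ℝ) 1)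
    (hμmono : ∀ A B : Set X, MeasurableSet A → MeasurableSet B → A ⊆ B → μ A ≤ μ B)
    -- p, q ≥ 1
    (p q : ℝ) (hp : 1 ≤ p) (hq : 1 ≤ q)
    -- f, g, h : X → [0,1] measurable
    (f g h : X → ℝ) (hf : Measurable f) (hg : Measurable g) (hh : Measurable h)
    (hfY : ∀ x, f x ∈ Set.Icc (0:ℝ) 1) (hgY : ∀ x, g x ∈ Set.Icc (0:ℝ) 1)
    (hhY : ∀ x, h x ∈ Set.Icc (0:ℝ) 1)
    -- f, g comonotone and f, h comonotone
    (hfg : ∀ x y, 0 ≤ (f x - f y) * (g x - g y))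
    (hfh : ∀ x y, 0 ≤ (f x - f y) * (h x - h y))
    (A : Set X) (hA : MeasurableSet A) :
    sugeno01 μ f A * (sugeno01 μ g A) ^ (p/(p+q)) * (sugeno01 μ h A) ^ (q/(p+q)) ≤
      (sugeno01 μ (fun x => f x ^ p * g x ^ p) A) ^ (1/(p+q)) *
      (sugeno01 μ (fun x => f x ^ q * h x ^ q) A) ^ (1/(p+q)) := by
  have hμ : ∀ s, MeasurableSet s → 0 ≤ μ s := fun s hs => (hμY s hs).1
  have hf0 : 0 ≤ f := fun x => (hfY x).1
  have hg0 : 0 ≤ g := fun x => (hgY x).1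
  have hh0 : 0 ≤ h := fun x => (hhY x).1
  have hfg' : Monovary f g := monovary_iff_forall_mul_nonneg.mpr fun x y => hfg y x
  have hfh' : Monovary f h := monovary_iff_forall_mul_nonneg.mpr fun x y => hfh y x
  have hF := sugeno01_nonneg hμ hf hA
  have hG := sugeno01_nonneg hμ hg hA
  have hH := sugeno01_nonneg hμ hh hA
  rw [mul_rpow_div_add_mul_rpow_div_add_eq hF hG hH (by linarith)]
  refine mul_le_mul_of_nonneg ?_ ?_ (by positivity)
    (Real.rpow_nonneg (sugeno01_nonneg hμ (by fun_prop) hA) _)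
  · gcongr
    exact rpow_mul_rpow_le_sugeno01 hμ hμmono hf hg hf0 hg0 hfg' hA hp
  · gcongr
    exact rpow_mul_rpow_le_sugeno01 hμ hμmono hf hh hf0 hh0 hfh' hA hq

/-- Carlson type inequality for the Sugeno integral of comonotone functions:
`((S)∫_A f dμ) ((S)∫_A g dμ)^{p/(p+q)} ((S)∫_A h dμ)^{q/(p+q)} ≤
((S)∫_A f^p g^p dμ)^{1/(p+q)} ((S)∫_A f^q h^q dμ)^{1/(p+q)}`. -/
theorem carlson_sugeno_wang {X : Type*} [MeasurableSpace X]
    -- μ : F → [0,1] is a monotone measure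
    (μ : Set X → ℝ)
    (hμY : ∀ A : Set X, MeasurableSet A → μ A ∈ Set.Icc (0:ℝ) 1)
    (hμ0 : μ ∅ = 0) (hμX : 0 < μ Set.univ)
    (hμmono : ∀ A B : Set X, MeasurableSet A → MeasurableSet B → A ⊆ B → μ A ≤ μ B)
    -- p, q ≥ 1
    (p q : ℝ) (hp : 1 ≤ p) (hq : 1 ≤ q)
    -- f, g, h : X → [0,1] measurable
    (f g h : X → ℝ) (hf : Measurable f) (hg : Measurable g) (hh : Measurable h)
    (hfY : ∀ x, f x ∈ Set.Icc (0:ℝ) 1) (hgY : ∀ x, g x ∈ Set.Icc (0:ℝ) 1)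
    (hhY : ∀ x, h x ∈ Set.Icc (0:ℝ) 1)
    -- f, g comonotone and f, h comonotone
    (hfg : ∀ x y, 0 ≤ (f x - f y) * (g x - g y))
    (hfh : ∀ x y, 0 ≤ (f x - f y) * (h x - h y))
    (A : Set X) (hA : MeasurableSet A) :
    sugeno01 μ f A * (sugeno01 μ g A) ^ (p/(p+q)) * (sugeno01 μ h A) ^ (q/(p+q)) ≤
      (sugeno01 μ (fun x => f x ^ p * g x ^ p) A) ^ (1/(p+q)) *
      (sugeno01 μ (fun x => f x ^ q * h x ^ q) A) ^ (1/(p+q)) :=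
  carlson_sugeno_wang_general μ hμY hμmono p q hp hq f g h hf hg hh hfY hgY hhY hfg hfh A hA
end

section
/- Let (X, F) be a measurable space, μ : F → [0,∞] a monotone measure, and p, q ≥ 1. Let f, h : X → [0,∞) be comonotone measurable functions, and let A ∈ F with 0 < μ(A) < ∞ and (C)∫_A f dμ < ∞. Then ((C)∫_A f dμ)² · ((C)∫_A h dμ) ≤ μ(A)^{3 − (1/p + 1/q)} · ((C)∫_A f^p dμ)^{1/p} · ((C)∫_A f^q h^q dμ)^{1/q}. -/
/-!
Write `ν_g t = μ (A ∩ {g ≥ t})`: it is antitone and bounded by `m = μ A`, so by the layer cake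
formula `(C)∫_A g dμ = ∫ ν_g = ∫_0^m λ_g`, where `λ_g l` is the length of `{t > 0 | ν_g t > l}`.
Passing from `g` to `g ^ r` replaces `λ_g` by `λ_g ^ r`, so Hölder's inequality on `(0, m)` gives
`(C)∫ g ≤ m ^ (1 - 1/r) ((C)∫ g ^ r) ^ (1/r)`. For comonotone `f, h` the level sets `{f ≥ s}` and
`{h ≥ t}` are nested, whence `λ_f λ_h ≤ λ_{fh}`, and Chebyshev's inequality for the antitone
`λ_f, λ_h` on `(0, m)` gives `(C)∫ f (C)∫ h ≤ m (C)∫ f h`. The theorem follows by bounding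
`(C)∫ f` and `(C)∫ f (C)∫ h` in `(C)∫ f · ((C)∫ f (C)∫ h)`.
-/

open scoped ENNReal NNReal

/-- The Choquet integral of `f` on `A` with respect to the monotone set
function `μ`: `(C)∫_A f dμ = ∫_0^∞ μ(A ∩ {f ≥ t}) dt`. -/
noncomputable def choquet {X : Type*} (μ : Set X → ℝ≥0∞) (f : X → ℝ≥0∞)
    (A : Set X) : ℝ≥0∞ :=
  ∫⁻ t in Set.Ioi (0:ℝ), μ (A ∩ {x | ENNReal.ofReal t ≤ f x})

/-- `f, g : X → [0,∞)` are comonotone: `(f(x) − f(y))(g(x) − g(y)) ≥ 0`. -/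
def Comonotone {X : Type*} (f g : X → ℝ≥0) : Prop :=
  ∀ x y, 0 ≤ ((f x : ℝ) - (f y : ℝ)) * ((g x : ℝ) - (g y : ℝ))

open MeasureTheory Set

section SuperlevelVolume

lemma le_volume_of_forall_ofReal_lt {S : Set ℝ} {a : ℝ≥0∞}
    (h : ∀ t, 0 < t → ENNReal.ofReal t < a → t ∈ S) : a ≤ volume S := by
  refine le_of_forall_lt fun c hc => ?_
  obtain ⟨s, -, hcs, hsa⟩ := ENNReal.lt_iff_exists_real_btwn.mp hc
  have hIoo : Ioo 0 s ⊆ S := fun t ht =>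
    h t ht.1 ((ENNReal.ofReal_lt_ofReal_iff (ht.1.trans ht.2)).mpr ht.2 |>.trans hsa)
  calc c < ENNReal.ofReal s := hcs
    _ = volume (Ioo 0 s) := by rw [Real.volume_Ioo, sub_zero]
    _ ≤ volume S := measure_mono hIoo

lemma volume_le_of_forall_ofReal_le {S : Set ℝ} {a : ℝ≥0∞} (hS : S ⊆ Ioi 0)
    (h : ∀ t ∈ S, ENNReal.ofReal t ≤ a) : volume S ≤ a := by
  rcases eq_or_ne a ∞ with rfl | ha
  · exact le_top
  have hIoc : S ⊆ Ioc 0 a.toReal := fun t ht =>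
    ⟨hS ht, (ENNReal.ofReal_le_iff_le_toReal ha).mp (h t ht)⟩
  calc volume S ≤ volume (Ioc 0 a.toReal) := measure_mono hIoc
    _ = a := by rw [Real.volume_Ioc, sub_zero, ENNReal.ofReal_toReal ha]

/-- The `λ_ν` of the header: for antitone `ν`, the generalized inverse of `ν`. -/
noncomputable def superlevelVolume (ν : ℝ → ℝ≥0∞) (l : ℝ) : ℝ≥0∞ :=
  volume ({t | ENNReal.ofReal l < ν t} ∩ Ioi 0)

variable {ν : ℝ → ℝ≥0∞}

lemma superlevelVolume_antitone (ν : ℝ → ℝ≥0∞) : Antitone (superlevelVolume ν) :=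
  fun _ _ hl => measure_mono <| inter_subset_inter_left _ fun _ ht =>
    (ENNReal.ofReal_le_ofReal hl).trans_lt ht

lemma ofReal_le_superlevelVolume (hν : Antitone ν) {l t : ℝ}
    (ht : ENNReal.ofReal l < ν t) : ENNReal.ofReal t ≤ superlevelVolume ν l :=
  le_volume_of_forall_ofReal_lt fun _ hs hst =>
    ⟨ht.trans_le (hν ((ENNReal.ofReal_lt_ofReal_iff_of_nonneg hs.le).mp hst).le), hs⟩

lemma lt_of_ofReal_lt_superlevelVolume (hν : Antitone ν) {l t : ℝ}
    (ht : ENNReal.ofReal t < superlevelVolume ν l) : ENNReal.ofReal l < ν t := by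
  by_contra! hνt
  refine ht.not_ge (volume_le_of_forall_ofReal_le inter_subset_right fun s hs => ?_)
  refine ENNReal.ofReal_le_ofReal (le_of_not_ge fun hts => ?_)
  exact (hs.1.trans_le ((hν hts).trans hνt)).false

lemma superlevelVolume_eq_zero {c l : ℝ} (hle : ∀ t, ν t ≤ ENNReal.ofReal c) (hl : c ≤ l) :
    superlevelVolume ν l = 0 := by
  have hempty : {t | ENNReal.ofReal l < ν t} = ∅ :=
    eq_empty_of_forall_notMem fun t ht => ht.not_ge ((hle t).trans (ENNReal.ofReal_le_ofReal hl))
  rw [superlevelVolume, hempty, empty_inter, measure_empty]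

lemma superlevelVolume_comp_rpow (hν : Antitone ν) {r : ℝ} (hr : 0 < r) (l : ℝ) :
    superlevelVolume (fun t => ν (t ^ (1 / r))) l = superlevelVolume ν l ^ r := by
  have hpow : ∀ t : ℝ, 0 < t → ENNReal.ofReal (t ^ (1 / r)) = ENNReal.ofReal t ^ r⁻¹ :=
    fun t ht => by rw [← ENNReal.ofReal_rpow_of_pos ht, one_div]
  refine le_antisymm (volume_le_of_forall_ofReal_le inter_subset_right ?_)
    (le_volume_of_forall_ofReal_lt ?_)
  · rintro t ⟨hlt, ht⟩
    have := ofReal_le_superlevelVolume hν hlt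
    rwa [hpow t ht, ENNReal.rpow_inv_le_iff hr] at this
  · intro t ht hlt
    refine ⟨lt_of_ofReal_lt_superlevelVolume hν ?_, ht⟩
    rwa [hpow t ht, ← not_le, ENNReal.le_rpow_inv_iff hr, not_le]

lemma superlevelVolume_mul_le {νf νh νfh : ℝ → ℝ≥0∞} (hf : Antitone νf) (hh : Antitone νh)
    (hfh : Antitone νfh) (hmin : ∀ s t, 0 < s → 0 < t → min (νf s) (νh t) ≤ νfh (s * t))
    (l : ℝ) : superlevelVolume νf l * superlevelVolume νh l ≤ superlevelVolume νfh l := by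
  refine ENNReal.mul_le_of_forall_lt fun a ha b hb => ?_
  obtain ⟨s, -, has, hs⟩ := ENNReal.lt_iff_exists_real_btwn.mp ha
  obtain ⟨t, -, hbt, ht⟩ := ENNReal.lt_iff_exists_real_btwn.mp hb
  have hs0 : 0 < s := ENNReal.ofReal_pos.mp (pos_of_gt has)
  have ht0 : 0 < t := ENNReal.ofReal_pos.mp (pos_of_gt hbt)
  have hst : ENNReal.ofReal l < νfh (s * t) :=
    (lt_min (lt_of_ofReal_lt_superlevelVolume hf hs)
      (lt_of_ofReal_lt_superlevelVolume hh ht)).trans_le (hmin s t hs0 ht0)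
  calc a * b ≤ ENNReal.ofReal s * ENNReal.ofReal t := by gcongr
    _ = ENNReal.ofReal (s * t) := (ENNReal.ofReal_mul hs0.le).symm
    _ ≤ superlevelVolume νfh l := ofReal_le_superlevelVolume hfh hst

end SuperlevelVolume

section LayerCake

variable {ν : ℝ → ℝ≥0∞}

lemma setLIntegral_Ioi_eq_setLIntegral_superlevelVolume (hν : Measurable ν)
    (hfin : ∀ t, ν t ≠ ∞) :
    ∫⁻ t in Ioi 0, ν t = ∫⁻ l in Ioi 0, superlevelVolume ν l := by
  have hlayer := lintegral_eq_lintegral_meas_lt (volume.restrict (Ioi (0:ℝ)))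
    (ae_of_all _ fun t => ENNReal.toReal_nonneg) hν.ennreal_toReal.aemeasurable
  simp only [ENNReal.ofReal_toReal (hfin _)] at hlayer
  rw [hlayer]
  refine setLIntegral_congr_fun measurableSet_Ioi fun l hl => ?_
  rw [Measure.restrict_apply (measurableSet_lt measurable_const hν.ennreal_toReal),
    superlevelVolume]
  congr 1
  ext t
  simp only [mem_inter_iff, mem_ofPred_eq, ENNReal.ofReal_lt_iff_lt_toReal hl.le (hfin t)]

lemma setLIntegral_superlevelVolume_Ioi_eq_Ioo {c : ℝ} (hle : ∀ t, ν t ≤ ENNReal.ofReal c) :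
    ∫⁻ l in Ioi 0, superlevelVolume ν l = ∫⁻ l in Ioo 0 c, superlevelVolume ν l := by
  have hind : (Iio c).indicator (superlevelVolume ν) = superlevelVolume ν := by
    ext l
    by_cases hl : l < c
    · simp [hl]
    · simp [hl, superlevelVolume_eq_zero hle (not_lt.mp hl)]
  conv_lhs => rw [← hind, setLIntegral_indicator measurableSet_Iio, Iio_inter_Ioi]

lemma setLIntegral_Ioi_eq_setLIntegral_Ioo_superlevelVolume (hν : Antitone ν) {m : ℝ≥0∞}
    (hm : m ≠ ∞) (hle : ∀ t, ν t ≤ m) :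
    ∫⁻ t in Ioi 0, ν t = ∫⁻ l in Ioo 0 m.toReal, superlevelVolume ν l := by
  rw [setLIntegral_Ioi_eq_setLIntegral_superlevelVolume hν.measurable
      fun t => ((hle t).trans_lt hm.lt_top).ne,
    setLIntegral_superlevelVolume_Ioi_eq_Ioo fun t =>
      (hle t).trans_eq (ENNReal.ofReal_toReal hm).symm]

end LayerCake

lemma ENNReal.mul_add_mul_le_mul_add_mul {a b c d : ℝ≥0∞} (hab : a ≤ b) (hcd : c ≤ d) :
    a * d + b * c ≤ a * c + b * d := by
  obtain ⟨e, rfl⟩ := exists_add_of_le hcd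
  calc a * (c + e) + b * c = a * c + (a * e + b * c) := by ring
    _ ≤ a * c + (b * e + b * c) := by gcongr
    _ = a * c + b * (c + e) := by ring

theorem lintegral_mul_lintegral_le_of_antitone {α : Type*} [MeasurableSpace α] [LinearOrder α]
    {μ : Measure α} {a b : α → ℝ≥0∞} (ha : Measurable a) (hb : Measurable b)
    (ha' : Antitone a) (hb' : Antitone b) :
    (∫⁻ x, a x ∂μ) * (∫⁻ x, b x ∂μ) ≤ μ univ * ∫⁻ x, a x * b x ∂μ := by
  have hrearr : ∀ x y, a x * b y + a y * b x ≤ a x * b x + a y * b y := fun x y => by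
    rcases le_total x y with hxy | hxy
    · rw [add_comm (a x * b x), add_comm (a x * b y)]
      exact ENNReal.mul_add_mul_le_mul_add_mul (ha' hxy) (hb' hxy)
    · exact ENNReal.mul_add_mul_le_mul_add_mul (ha' hxy) (hb' hxy)
  have hdouble : ∫⁻ x, ∫⁻ y, (a x * b y + a y * b x) ∂μ ∂μ
      ≤ ∫⁻ x, ∫⁻ y, (a x * b x + a y * b y) ∂μ ∂μ :=
    lintegral_mono fun x => lintegral_mono fun y => hrearr x y
  have hleft : ∀ x, ∫⁻ y, (a x * b y + a y * b x) ∂μ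
      = a x * ∫⁻ y, b y ∂μ + (∫⁻ y, a y ∂μ) * b x := fun x => by
    rw [lintegral_add_left (hb.const_mul _), lintegral_const_mul _ hb, lintegral_mul_const _ ha]
  have hright : ∀ x, ∫⁻ y, (a x * b x + a y * b y) ∂μ
      = a x * b x * μ univ + ∫⁻ y, a y * b y ∂μ := fun x => by
    rw [lintegral_add_left measurable_const, lintegral_const]
  simp only [hleft, hright] at hdouble
  rw [lintegral_add_left (ha.mul_const _), lintegral_mul_const _ ha, lintegral_const_mul _ hb,
    lintegral_add_left (f := fun x => a x * b x * μ univ) ((ha.mul hb).mul_const _),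
    lintegral_mul_const (f := fun x => a x * b x) _ (ha.mul hb),
    lintegral_const, mul_comm (∫⁻ y, a y * b y ∂μ), ← two_mul, ← two_mul] at hdouble
  exact (ENNReal.mul_le_mul_iff_right two_ne_zero ENNReal.ofNat_ne_top).mp hdouble

section AntitoneIntegrals

variable {m : ℝ≥0∞}

lemma setLIntegral_le_rpow_mul_setLIntegral_comp_rpow {ν : ℝ → ℝ≥0∞} (hν : Antitone ν)
    (hm : m ≠ ∞) (hle : ∀ t, ν t ≤ m) {r : ℝ} (hr : 1 ≤ r) :
    ∫⁻ t in Ioi 0, ν t ≤ m ^ (1 - 1 / r) * (∫⁻ t in Ioi 0, ν (t ^ (1 / r))) ^ (1 / r) := by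
  have hr0 : 0 < r := zero_lt_one.trans_le hr
  set D := superlevelVolume ν
  have hHolder : ∫⁻ l in Ioo 0 m.toReal, D l
      ≤ (∫⁻ l in Ioo 0 m.toReal, D l ^ r) ^ (1 / r) * m ^ (1 - 1 / r) := by
    have := eLpNorm_le_eLpNorm_mul_rpow_measure_univ (μ := volume.restrict (Ioo 0 m.toReal))
      (p := 1) (q := ENNReal.ofReal r) (by simpa using hr)
      (superlevelVolume_antitone ν).measurable.aestronglyMeasurable
    rw [eLpNorm_one_eq_lintegral_enorm, eLpNorm_eq_lintegral_rpow_enorm_toReal (by simpa using hr0)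
      ENNReal.ofReal_ne_top] at this
    simpa only [enorm_eq_self, ENNReal.toReal_ofReal hr0.le, ENNReal.toReal_one, div_one,
      Measure.restrict_apply_univ, Real.volume_Ioo, sub_zero, ENNReal.ofReal_toReal hm] using this
  calc ∫⁻ t in Ioi 0, ν t = ∫⁻ l in Ioo 0 m.toReal, D l :=
        setLIntegral_Ioi_eq_setLIntegral_Ioo_superlevelVolume hν hm hle
    _ ≤ (∫⁻ l in Ioo 0 m.toReal, D l ^ r) ^ (1 / r) * m ^ (1 - 1 / r) := hHolder
    _ ≤ (∫⁻ l in Ioi 0, D l ^ r) ^ (1 / r) * m ^ (1 - 1 / r) := by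
        gcongr; exact Ioo_subset_Ioi_self
    _ = m ^ (1 - 1 / r) * (∫⁻ t in Ioi 0, ν (t ^ (1 / r))) ^ (1 / r) := by
        have hmeas : Measurable fun t : ℝ => ν (t ^ (1 / r)) :=
          hν.measurable.comp (measurable_id.pow_const _)
        rw [mul_comm, setLIntegral_Ioi_eq_setLIntegral_superlevelVolume hmeas
          (fun t => ((hle _).trans_lt hm.lt_top).ne)]
        simp_rw [D, superlevelVolume_comp_rpow hν hr0]

lemma setLIntegral_mul_setLIntegral_le {νf νh νfh : ℝ → ℝ≥0∞} (hf : Antitone νf)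
    (hh : Antitone νh) (hfh : Antitone νfh) (hm : m ≠ ∞) (hlef : ∀ t, νf t ≤ m)
    (hleh : ∀ t, νh t ≤ m) (hlefh : ∀ t, νfh t ≤ m)
    (hmin : ∀ s t, 0 < s → 0 < t → min (νf s) (νh t) ≤ νfh (s * t)) :
    (∫⁻ t in Ioi 0, νf t) * (∫⁻ t in Ioi 0, νh t) ≤ m * ∫⁻ t in Ioi 0, νfh t := by
  have hvol : volume.restrict (Ioo (0:ℝ) m.toReal) univ = m := by
    rw [Measure.restrict_apply_univ, Real.volume_Ioo, sub_zero, ENNReal.ofReal_toReal hm]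
  rw [setLIntegral_Ioi_eq_setLIntegral_Ioo_superlevelVolume hf hm hlef,
    setLIntegral_Ioi_eq_setLIntegral_Ioo_superlevelVolume hh hm hleh,
    setLIntegral_Ioi_eq_setLIntegral_Ioo_superlevelVolume hfh hm hlefh]
  calc _ ≤ volume.restrict (Ioo (0:ℝ) m.toReal) univ
        * ∫⁻ l in Ioo 0 m.toReal, superlevelVolume νf l * superlevelVolume νh l :=
        lintegral_mul_lintegral_le_of_antitone (superlevelVolume_antitone νf).measurable
          (superlevelVolume_antitone νh).measurable (superlevelVolume_antitone νf)
          (superlevelVolume_antitone νh)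
    _ ≤ _ := by
        rw [hvol]
        gcongr with l
        exact superlevelVolume_mul_le hf hh hfh hmin l

end AntitoneIntegrals

lemma Comonotone.setOf_le_subset_or {X : Type*} {f h : X → ℝ≥0} (hfh : Comonotone f h)
    (s t : ℝ≥0∞) :
    {x | s ≤ (f x : ℝ≥0∞)} ⊆ {x | t ≤ (h x : ℝ≥0∞)} ∨
      {x | t ≤ (h x : ℝ≥0∞)} ⊆ {x | s ≤ (f x : ℝ≥0∞)} := by
  by_contra! hcon
  obtain ⟨⟨x, hfx, hhx⟩, ⟨y, hhy, hfy⟩⟩ := And.imp not_subset.mp not_subset.mp hcon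
  simp only [mem_ofPred_eq, not_le] at hfx hhx hhy hfy
  have hf : (f y : ℝ) < f x := by exact_mod_cast hfy.trans_le hfx
  have hh : (h x : ℝ) < h y := by exact_mod_cast hhx.trans_le hhy
  nlinarith [hfh x y]

section Choquet

variable {X : Type*} [MeasurableSpace X] {μ : Set X → ℝ≥0∞} {A : Set X}

lemma antitone_measure_inter_setOf_le
    (hμ : ∀ A B : Set X, MeasurableSet A → MeasurableSet B → A ⊆ B → μ A ≤ μ B)
    (hA : MeasurableSet A) {g : X → ℝ≥0∞} (hg : Measurable g) :
    Antitone fun t : ℝ => μ (A ∩ {x | ENNReal.ofReal t ≤ g x}) :=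
  fun _ _ hst => hμ _ _ (hA.inter (hg measurableSet_Ici)) (hA.inter (hg measurableSet_Ici))
    (inter_subset_inter_right _ fun _ hx => (ENNReal.ofReal_le_ofReal hst).trans hx)

lemma measure_inter_setOf_le_le
    (hμ : ∀ A B : Set X, MeasurableSet A → MeasurableSet B → A ⊆ B → μ A ≤ μ B)
    (hA : MeasurableSet A) {g : X → ℝ≥0∞} (hg : Measurable g) (t : ℝ) :
    μ (A ∩ {x | ENNReal.ofReal t ≤ g x}) ≤ μ A :=
  hμ _ _ (hA.inter (hg measurableSet_Ici)) hA inter_subset_left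

theorem choquet_le_rpow_mul_choquet_rpow
    (hμ : ∀ A B : Set X, MeasurableSet A → MeasurableSet B → A ⊆ B → μ A ≤ μ B)
    (hA : MeasurableSet A) (hAfin : μ A ≠ ∞) {g : X → ℝ≥0∞} (hg : Measurable g) {r : ℝ}
    (hr : 1 ≤ r) :
    choquet μ g A ≤ μ A ^ (1 - 1 / r) * choquet μ (fun x => g x ^ r) A ^ (1 / r) := by
  have hr0 : 0 < r := zero_lt_one.trans_le hr
  have hlevel : choquet μ (fun x => g x ^ r) A
      = ∫⁻ t in Ioi 0, μ (A ∩ {x | ENNReal.ofReal (t ^ (1 / r)) ≤ g x}) := by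
    refine setLIntegral_congr_fun measurableSet_Ioi fun t ht => ?_
    simp_rw [← ENNReal.ofReal_rpow_of_pos ht, one_div, ENNReal.rpow_inv_le_iff hr0]
  rw [hlevel]
  exact setLIntegral_le_rpow_mul_setLIntegral_comp_rpow (antitone_measure_inter_setOf_le hμ hA hg)
    hAfin (measure_inter_setOf_le_le hμ hA hg) hr

lemma Comonotone.min_measure_inter_setOf_le_le {f h : X → ℝ≥0} (hfh : Comonotone f h)
    (hμ : ∀ A B : Set X, MeasurableSet A → MeasurableSet B → A ⊆ B → μ A ≤ μ B)
    (hA : MeasurableSet A) (hf : Measurable f) (hh : Measurable h) {s t : ℝ} (hs : 0 ≤ s) :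
    min (μ (A ∩ {x | ENNReal.ofReal s ≤ f x})) (μ (A ∩ {x | ENNReal.ofReal t ≤ h x}))
      ≤ μ (A ∩ {x | ENNReal.ofReal (s * t) ≤ f x * h x}) := by
  have hmeas : ∀ {g : X → ℝ≥0∞} {c : ℝ≥0∞}, Measurable g → MeasurableSet (A ∩ {x | c ≤ g x}) :=
    fun hg => hA.inter (hg measurableSet_Ici)
  have hprod : ∀ x, ENNReal.ofReal s ≤ f x → ENNReal.ofReal t ≤ h x →
      ENNReal.ofReal (s * t) ≤ f x * h x := fun x hfx hhx => by
    rw [ENNReal.ofReal_mul hs]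
    exact mul_le_mul' hfx hhx
  have hfm := hf.coe_nnreal_ennreal
  have hhm := hh.coe_nnreal_ennreal
  rcases hfh.setOf_le_subset_or (ENNReal.ofReal s) (ENNReal.ofReal t) with hsub | hsub
  · exact (min_le_left _ _).trans <| hμ _ _ (hmeas hfm) (hmeas (hfm.mul hhm))
      fun x ⟨hxA, hfx⟩ => ⟨hxA, hprod x hfx (hsub hfx)⟩
  · exact (min_le_right _ _).trans <| hμ _ _ (hmeas hhm) (hmeas (hfm.mul hhm))
      fun x ⟨hxA, hhx⟩ => ⟨hxA, hprod x (hsub hhx) hhx⟩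

theorem Comonotone.choquet_mul_choquet_le {f h : X → ℝ≥0} (hfh : Comonotone f h)
    (hμ : ∀ A B : Set X, MeasurableSet A → MeasurableSet B → A ⊆ B → μ A ≤ μ B)
    (hA : MeasurableSet A) (hAfin : μ A ≠ ∞) (hf : Measurable f) (hh : Measurable h) :
    choquet μ (fun x => (f x : ℝ≥0∞)) A * choquet μ (fun x => (h x : ℝ≥0∞)) A
      ≤ μ A * choquet μ (fun x => (f x : ℝ≥0∞) * h x) A := by
  have hfm := hf.coe_nnreal_ennreal
  have hhm := hh.coe_nnreal_ennreal
  exact setLIntegral_mul_setLIntegral_le (antitone_measure_inter_setOf_le hμ hA hfm)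
    (antitone_measure_inter_setOf_le hμ hA hhm)
    (antitone_measure_inter_setOf_le hμ hA (hfm.mul hhm)) hAfin
    (measure_inter_setOf_le_le hμ hA hfm) (measure_inter_setOf_le_le hμ hA hhm)
    (measure_inter_setOf_le_le hμ hA (hfm.mul hhm))
    fun _ _ hs _ => hfh.min_measure_inter_setOf_le_le hμ hA hf hh hs.le

end Choquet

theorem carlson_choquet_ouyang_general {X : Type*} [MeasurableSpace X]
    -- μ : F → [0,∞] is a monotone measure
    (μ : Set X → ℝ≥0∞)
    (hμmono : ∀ A B : Set X, MeasurableSet A → MeasurableSet B → A ⊆ B → μ A ≤ μ B)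
    -- p, q ≥ 1
    (p q : ℝ) (hp : 1 ≤ p) (hq : 1 ≤ q)
    -- f, h : X → [0,∞) comonotone measurable
    (f h : X → ℝ≥0) (hf : Measurable f) (hh : Measurable h)
    (hfh : Comonotone f h)
    -- A ∈ F with 0 < μ(A) < ∞, and f integrable on A
    (A : Set X) (hA : MeasurableSet A) (hAfin : μ A < ∞) :
    (choquet μ (fun x => (f x : ℝ≥0∞)) A) ^ 2 *
        choquet μ (fun x => (h x : ℝ≥0∞)) A ≤
      (μ A) ^ (3 - (1/p + 1/q)) *
        (choquet μ (fun x => (f x : ℝ≥0∞) ^ p) A) ^ (1/p) *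
        (choquet μ (fun x => (f x : ℝ≥0∞) ^ q * (h x : ℝ≥0∞) ^ q) A) ^ (1/q) := by
  have hfm := hf.coe_nnreal_ennreal
  have hhm := hh.coe_nnreal_ennreal
  have hfhm : Measurable fun x => (f x : ℝ≥0∞) * h x := hfm.mul hhm
  have hf_le := choquet_le_rpow_mul_choquet_rpow hμmono hA hAfin.ne hfm hp
  have hfh_le := choquet_le_rpow_mul_choquet_rpow hμmono hA hAfin.ne hfhm hq
  simp_rw [ENNReal.mul_rpow_of_nonneg _ _ (zero_le_one.trans hq)] at hfh_le
  have hcheb := hfh.choquet_mul_choquet_le hμmono hA hAfin.ne hf hh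
  have hexp : ∀ r : ℝ, 1 ≤ r → 0 ≤ 1 - 1 / r := fun r hr =>
    sub_nonneg.mpr ((div_le_one (zero_lt_one.trans_le hr)).mpr hr)
  set m := μ A
  set Cf := choquet μ (fun x => (f x : ℝ≥0∞)) A
  set Cfp := choquet μ (fun x => (f x : ℝ≥0∞) ^ p) A
  set Cfhq := choquet μ (fun x => (f x : ℝ≥0∞) ^ q * (h x : ℝ≥0∞) ^ q) A
  calc Cf ^ 2 * choquet μ (fun x => (h x : ℝ≥0∞)) A
      = Cf * (Cf * choquet μ (fun x => (h x : ℝ≥0∞)) A) := by ring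
    _ ≤ (m ^ (1 - 1 / p) * Cfp ^ (1 / p)) * (m * (m ^ (1 - 1 / q) * Cfhq ^ (1 / q))) :=
        mul_le_mul' hf_le (hcheb.trans (mul_le_mul_right hfh_le m))
    _ = m ^ ((1 - 1 / p) + 1 + (1 - 1 / q)) * Cfp ^ (1 / p) * Cfhq ^ (1 / q) := by
        rw [ENNReal.rpow_add_of_nonneg _ _ (by linarith [hexp p hp]) (hexp q hq),
          ENNReal.rpow_add_of_nonneg _ _ (hexp p hp) zero_le_one, ENNReal.rpow_one]
        ring
    _ = _ := by rw [show (1 - 1 / p) + 1 + (1 - 1 / q) = 3 - (1 / p + 1 / q) by ring]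

/-- Ouyang's Carlson type inequality for the Choquet integral of comonotone
functions `f, h`:
`((C)∫_A f dμ)² ((C)∫_A h dμ) ≤ μ(A)^{3−(1/p+1/q)} ((C)∫_A f^p dμ)^{1/p}
((C)∫_A f^q h^q dμ)^{1/q}`. -/
theorem carlson_choquet_ouyang {X : Type*} [MeasurableSpace X]
    -- μ : F → [0,∞] is a monotone measure
    (μ : Set X → ℝ≥0∞)
    (hμ0 : μ ∅ = 0) (hμX : 0 < μ Set.univ)
    (hμmono : ∀ A B : Set X, MeasurableSet A → MeasurableSet B → A ⊆ B → μ A ≤ μ B)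
    -- p, q ≥ 1
    (p q : ℝ) (hp : 1 ≤ p) (hq : 1 ≤ q)
    -- f, h : X → [0,∞) comonotone measurable
    (f h : X → ℝ≥0) (hf : Measurable f) (hh : Measurable h)
    (hfh : Comonotone f h)
    -- A ∈ F with 0 < μ(A) < ∞, and f integrable on A
    (A : Set X) (hA : MeasurableSet A) (hA0 : 0 < μ A) (hAfin : μ A < ∞)
    (hfint : choquet μ (fun x => (f x : ℝ≥0∞)) A < ∞) :
    (choquet μ (fun x => (f x : ℝ≥0∞)) A) ^ 2 *
        choquet μ (fun x => (h x : ℝ≥0∞)) A ≤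
      (μ A) ^ (3 - (1/p + 1/q)) *
        (choquet μ (fun x => (f x : ℝ≥0∞) ^ p) A) ^ (1/p) *
        (choquet μ (fun x => (f x : ℝ≥0∞) ^ q * (h x : ℝ≥0∞) ^ q) A) ^ (1/q) :=
  carlson_choquet_ouyang_general μ hμmono p q hp hq f h hf hh hfh A hA hAfin
end
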